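/- arXiv:0905.0944 — 2 statements merged into one kernel-verified Lean document; each statement's English description precedes it below -/
import Mathlib

section
/- Let H be a separable Hilbert space and let D be a dense linear subspace. If A is a linear operator in L†(D) (i.e., A maps D into D, dom(A*) ⊇ D, and A* maps D into D) and A is closed, then D = H and every element of L†(D) is a bounded operator on H. -/
/-! On the graph of `A`, a Hilbert space because `A` is closed, the map `(x, Ax) ↦ A*(Ax)` is
everywhere defined, and it is continuous by the closed graph theorem because
`⟪A*(Ax), w⟫ = ⟪Ax, Aw⟫` for `w` in the dense set `D`. Hence
`‖Ax‖² = ⟪A*(Ax), x⟫ ≤ C max(‖x‖, ‖Ax‖) ‖x‖`, so `A` is bounded, and a bounded closed operator has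
closed domain: `D = H`. Every `B ∈ L†(D)` is then everywhere defined with densely defined adjoint,
and the same closed graph argument bounds it. -/

open scoped InnerProductSpace NNReal

section

variable {𝕜 E F : Type*} [RCLike 𝕜]

theorem LinearMap.continuous_of_dense_continuous_inner [NormedAddCommGroup E] [NormedSpace 𝕜 E]
    [CompleteSpace E] [NormedAddCommGroup F] [InnerProductSpace 𝕜 F] [CompleteSpace F]
    {T : E →ₗ[𝕜] F} {s : Set F} (hs : Dense s)
    (h : ∀ w ∈ s, Continuous fun x => ⟪T x, w⟫_𝕜) : Continuous T :=
  T.continuous_of_seq_closed_graph fun _u x _y hu hTu =>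
    hs.eq_of_inner_left 𝕜 fun w hw =>
      tendsto_nhds_unique (hTu.inner tendsto_const_nhds) (((h w hw).tendsto x).comp hu)

theorem le_add_one_mul_of_sq_le_mul_max_mul {a b C : ℝ} (ha : 0 ≤ a) (hb : 0 ≤ b)
    (hC : 0 ≤ C) (h : a ^ 2 ≤ C * max b a * b) : a ≤ (C + 1) * b := by
  rcases le_total a b with hab | hba
  · nlinarith
  · rw [max_eq_right hba] at h
    rcases ha.eq_or_lt with rfl | ha
    · positivity
    · nlinarith

namespace LinearPMap

variable [NormedAddCommGroup E] [NormedAddCommGroup F]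

theorem IsClosed.isClosed_domain [NormedSpace 𝕜 E] [NormedSpace 𝕜 F] [CompleteSpace E]
    [CompleteSpace F] {A : E →ₗ.[𝕜] F} (hA : A.IsClosed) {C : ℝ≥0}
    (hC : ∀ x : A.domain, ‖A x‖ ≤ C * ‖(x : E)‖) : _root_.IsClosed (A.domain : Set E) := by
  have : CompleteSpace A.graph := hA.completeSpace_coe
  let fst : A.graph →L[𝕜] E := ContinuousLinearMap.fst 𝕜 E F ∘L A.graph.subtypeL
  have hfst : AntilipschitzWith (C + 1) fst := by
    refine fst.antilipschitz_of_bound fun e => ?_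
    rcases e with ⟨⟨_, _⟩, he⟩
    obtain ⟨x, rfl, rfl⟩ := A.mem_graph_iff.mp he
    change max ‖(x : E)‖ ‖A x‖ ≤ (C + 1) * ‖(x : E)‖
    exact max_le (by nlinarith [norm_nonneg (x : E), C.2])
      (by nlinarith [hC x, norm_nonneg (x : E)])
  have hrange : Set.range fst = A.domain := by
    ext x
    simp only [Set.mem_range, SetLike.mem_coe, A.mem_domain_iff]
    exact ⟨fun ⟨e, he⟩ => ⟨e.1.2, he ▸ e.2⟩, fun ⟨y, hy⟩ => ⟨⟨(x, y), hy⟩, rfl⟩⟩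
  exact hrange ▸ hfst.isClosed_range fst.uniformContinuous

section Hilbert

variable [InnerProductSpace 𝕜 E] [InnerProductSpace 𝕜 F] [CompleteSpace E] [CompleteSpace F]

theorem exists_bound_of_domain_eq_top_of_dense_adjoint_domain {B : E →ₗ.[𝕜] F}
    (hB : B.domain = ⊤) (hB' : Dense (B†.domain : Set F)) :
    ∃ C : ℝ, ∀ x : B.domain, ‖B x‖ ≤ C * ‖(x : E)‖ := by
  have hdense : Dense (B.domain : Set E) := by simp [hB]
  let f : E →ₗ[𝕜] F := B.toFun ∘ₗ (LinearEquiv.ofTop _ hB).symm.toLinearMap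
  have hf : Continuous f := by
    refine f.continuous_of_dense_continuous_inner hB' fun w hw => ?_
    have : (fun x => ⟪f x, w⟫_𝕜) = fun x => ⟪x, B† ⟨w, hw⟩⟫_𝕜 :=
      funext fun x => (B.adjoint_isFormalAdjoint hdense).symm _ ⟨w, hw⟩
    exact this ▸ continuous_id.inner continuous_const
  exact ⟨‖(⟨f, hf⟩ : E →L[𝕜] F)‖, fun x => (⟨f, hf⟩ : E →L[𝕜] F).le_opNorm x⟩

theorem IsClosed.exists_bound_of_range_subset_adjoint_domain {A : E →ₗ.[𝕜] E} (hA : A.IsClosed)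
    (hdense : Dense (A.domain : Set E)) (hran : ∀ x : A.domain, A x ∈ A†.domain) :
    ∃ C : ℝ≥0, ∀ x : A.domain, ‖A x‖ ≤ C * ‖(x : E)‖ := by
  have : CompleteSpace A.graph := hA.completeSpace_coe
  have hsnd (e : A.graph) : (e : E × E).2 ∈ A†.domain := by
    obtain ⟨y, -, hy⟩ := A.mem_graph_iff.mp e.2
    exact hy ▸ hran y
  let snd : A.graph →ₗ[𝕜] A†.domain :=
    ((LinearMap.snd 𝕜 E E) ∘ₗ A.graph.subtype).codRestrict _ hsnd
  let T : A.graph →ₗ[𝕜] E := A†.toFun ∘ₗ snd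
  have hT : Continuous T := by
    refine T.continuous_of_dense_continuous_inner hdense fun w hw => ?_
    have : (fun e => ⟪T e, w⟫_𝕜) = fun e : A.graph => ⟪(e : E × E).2, A ⟨w, hw⟩⟫_𝕜 :=
      funext fun e => A.adjoint_isFormalAdjoint hdense (snd e) ⟨w, hw⟩
    exact this ▸ (continuous_snd.comp continuous_subtype_val).inner continuous_const
  let T' : A.graph →L[𝕜] E := ⟨T, hT⟩
  refine ⟨‖T'‖₊ + 1, fun x => ?_⟩
  let e : A.graph := ⟨((x : E), A x), A.mem_graph x⟩
  have hsq : ‖A x‖ ^ 2 ≤ ‖T'‖ * max ‖(x : E)‖ ‖A x‖ * ‖(x : E)‖ :=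
    calc ‖A x‖ ^ 2 = ‖⟪T e, x⟫_𝕜‖ := by
          have hTe : ⟪T e, x⟫_𝕜 = ⟪A x, A x⟫_𝕜 := A.adjoint_isFormalAdjoint hdense (snd e) x
          rw [hTe, inner_self_eq_norm_sq_to_K]
          simp
      _ ≤ ‖T' e‖ * ‖(x : E)‖ := norm_inner_le_norm _ _
      _ ≤ ‖T'‖ * max ‖(x : E)‖ ‖A x‖ * ‖(x : E)‖ := by
          gcongr
          exact T'.le_opNorm e
  exact le_add_one_mul_of_sq_le_mul_max_mul (norm_nonneg _) (norm_nonneg _) (norm_nonneg _) hsq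

end Hilbert

end LinearPMap

end

theorem stmt0_general {H : Type*} [NormedAddCommGroup H] [InnerProductSpace ℂ H] [CompleteSpace H]
    (D : Submodule ℂ H) (hD : Dense (D : Set H))
    (A : H →ₗ.[ℂ] H) (hAdom : A.domain = D)
    (hAmap : ∀ x : A.domain, A x ∈ D)
    (hAadjDom : D ≤ A.adjoint.domain)
    (hclosed : A.IsClosed) :
    D = ⊤ ∧
      ∀ B : H →ₗ.[ℂ] H, B.domain = D → (∀ x : B.domain, B x ∈ D) →
        D ≤ B.adjoint.domain → (∀ x : B.adjoint.domain, (x : H) ∈ D → B.adjoint x ∈ D) →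
        ∃ C : ℝ, ∀ x : B.domain, ‖B x‖ ≤ C * ‖(x : H)‖ := by
  subst hAdom
  obtain ⟨C, hC⟩ :=
    hclosed.exists_bound_of_range_subset_adjoint_domain hD fun x => hAadjDom (hAmap x)
  have htop : A.domain = ⊤ := by
    rw [← Submodule.coe_eq_univ, ← (hclosed.isClosed_domain hC).closure_eq, hD.closure_eq]
  exact ⟨htop, fun B hBdom _ hBadjDom _ =>
    LinearPMap.exists_bound_of_domain_eq_top_of_dense_adjoint_domain (hBdom.trans htop)
      (hD.mono hBadjDom)⟩

/-- If `D` is a dense subspace of a separable Hilbert space `H` and some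
`A ∈ L†(D)` (i.e. `A` maps `D` to `D`, `D ⊆ dom A*` and `A*` maps `D` to `D`) is closed,
then `D = H` and every element of `L†(D)` is a bounded operator. -/
theorem stmt0 {H : Type*} [NormedAddCommGroup H] [InnerProductSpace ℂ H] [CompleteSpace H]
    [TopologicalSpace.SeparableSpace H]
    (D : Submodule ℂ H) (hD : Dense (D : Set H))
    (A : H →ₗ.[ℂ] H) (hAdom : A.domain = D)
    (hAmap : ∀ x : A.domain, A x ∈ D)
    (hAadjDom : D ≤ A.adjoint.domain)
    (hAadjMap : ∀ x : A.adjoint.domain, (x : H) ∈ D → A.adjoint x ∈ D)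
    (hclosed : A.IsClosed) :
    D = ⊤ ∧
      ∀ B : H →ₗ.[ℂ] H, B.domain = D → (∀ x : B.domain, B x ∈ D) →
        D ≤ B.adjoint.domain → (∀ x : B.adjoint.domain, (x : H) ∈ D → B.adjoint x ∈ D) →
        ∃ C : ℝ, ∀ x : B.domain, ‖B x‖ ≤ C * ‖(x : H)‖ :=
  stmt0_general D hD A hAdom hAmap hAadjDom hclosed
end

section
/- Let X be a topological space and let f : X → ℝ be continuous. If every point of X has the property that f is not invertible on any neighborhood (i.e., there is no open set U and continuous g : U → ℝ with f·g = 1 on U), then f = 0 on X. Conversely, if |f(x)| > 0 for all x in an open set U then f is invertible on U. (The sheaf of continuous functions is a 'residue field' and an 'apartness field' in the internal sense.) -/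
/-- Let `f : X → ℝ` be continuous.  (1) If no point of `X` has an open
neighbourhood `U` carrying a continuous `g` with `f ⬝ g = 1` on `U` (i.e. `f` is nowhere
locally invertible), then `f = 0` on `X` (residue field property).  (2) If `|f| > 0` on an
open set `U`, then `f` is invertible on `U` (apartness field property). -/
theorem stmt15 {X : Type*} [TopologicalSpace X] (f : X → ℝ) (hf : Continuous f) :
    ((∀ x : X, ¬ ∃ (U : Set X) (g : X → ℝ), IsOpen U ∧ x ∈ U ∧ ContinuousOn g U ∧
        ∀ y ∈ U, f y * g y = 1) →
      ∀ x, f x = 0) ∧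
    (∀ U : Set X, IsOpen U → (∀ x ∈ U, 0 < |f x|) →
      ∃ g : X → ℝ, ContinuousOn g U ∧ ∀ x ∈ U, f x * g x = 1) := by
  constructor
  · intro h x
    by_contra hx
    apply h x
    refine ⟨{y | f y ≠ 0}, fun y => (f y)⁻¹, isOpen_ne.preimage hf, hx, ?_, ?_⟩
    · exact ContinuousOn.inv₀ hf.continuousOn (fun y hy => hy)
    · exact fun y hy => mul_inv_cancel₀ hy
  · intro U hU hpos
    refine ⟨fun y => (f y)⁻¹, ContinuousOn.inv₀ hf.continuousOn
      (fun y hy => abs_pos.mp (hpos y hy)), fun y hy => mul_inv_cancel₀ (abs_pos.mp (hpos y hy))⟩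
end
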